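/- arXiv:1611.00600 — 4 statements merged into one kernel-verified Lean document; each statement's English description precedes it below -/
import Mathlib

section
/- Let n ≥ 2 and let ω_1, ..., ω_n be distinct nonzero complex numbers lying on a single ray through the origin (i.e. ω_k = r_k e^{iθ} with r_k > 0 for a common angle θ). Then the inverse of the Vandermonde matrix V with entries V_{jk} = ω_k^{j-1} satisfies ‖V^{-1}‖_∞ = max_k ∏_{k'≠k} (1+|ω_{k'}|)/|ω_{k'}-ω_k|; that is, Gautschi's upper bound ‖V^{-1}‖_∞ ≤ max_k ∏_{k'≠k} (1+|ω_{k'}|)/|ω_{k'}-ω_k| is attained with equality. -/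
open Polynomial Finset

lemma sign_coeff {ι : Type*} (s : Finset ι) (c : ι → ℝ) :
    ∀ j, (∏ k ∈ s, (X - C (c k))).coeff j
      = (-1) ^ (s.card + j) * (∏ k ∈ s, (X + C (c k))).coeff j := by
  classical
  induction s using Finset.induction with
  | empty =>
    intro j
    rcases j with _ | j
    · simp
    · simp [coeff_one]
  | @insert a s ha ih =>
    intro j
    rw [Finset.prod_insert ha, Finset.prod_insert ha, Finset.card_insert_of_notMem ha]
    cases j with
    | zero =>
      simp only [mul_coeff_zero, coeff_sub, coeff_add, coeff_X_zero, coeff_C_zero, ih 0,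
        zero_sub, zero_add, pow_succ, pow_zero, mul_one, add_zero]
      ring
    | succ j =>
      rw [sub_mul, add_mul, coeff_sub, coeff_add, coeff_X_mul, coeff_X_mul,
        coeff_C_mul, coeff_C_mul, ih j, ih (j+1)]
      have h2 : ((-1:ℝ)) ^ (s.card + 1 + (j + 1)) = (-1)^(s.card + j) := by
        have h3 : s.card + 1 + (j+1) = (s.card + j) + 2 := by ring
        rw [h3, pow_add]; norm_num
      rw [h2]
      have h4 : ((-1:ℝ)) ^ (s.card + (j+1)) = -(-1)^(s.card + j) := by
        rw [← add_assoc, pow_succ]; ring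
      rw [h4]
      ring

lemma nonneg_coeff {ι : Type*} (s : Finset ι) (c : ι → ℝ) (hc : ∀ k, 0 ≤ c k) :
    ∀ j, 0 ≤ (∏ k ∈ s, (X + C (c k))).coeff j := by
  classical
  induction s using Finset.induction with
  | empty =>
    intro j
    rcases j with _ | j <;> simp [coeff_one]
  | @insert a s ha ih =>
    intro j
    rw [Finset.prod_insert ha]
    cases j with
    | zero =>
      simp only [mul_coeff_zero, coeff_add, coeff_X_zero, coeff_C_zero, zero_add]
      exact mul_nonneg (hc a) (ih 0)
    | succ j =>
      rw [add_mul, coeff_add, coeff_X_mul, coeff_C_mul]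
      exact add_nonneg (ih j) (mul_nonneg (hc a) (ih (j+1)))

lemma sum_abs_coeff {ι : Type*} (s : Finset ι) (c : ι → ℝ) (hc : ∀ k, 0 ≤ c k)
    (m : ℕ) (hm : s.card < m) :
    ∑ j ∈ Finset.range m, |(∏ k ∈ s, (X - C (c k))).coeff j| = ∏ k ∈ s, (1 + c k) := by
  have habs : ∀ j, |(∏ k ∈ s, (X - C (c k))).coeff j| = (∏ k ∈ s, (X + C (c k))).coeff j := by
    intro j
    rw [sign_coeff s c j, abs_mul, abs_pow, abs_neg, abs_one, one_pow, one_mul,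
      abs_of_nonneg (nonneg_coeff s c hc j)]
  simp only [habs]
  have hdeg : (∏ k ∈ s, (X + C (c k))).natDegree < m := by
    rw [Polynomial.natDegree_prod_of_monic _ _ (fun k _ => monic_X_add_C (c k))]
    simpa using hm
  have := Polynomial.eval_eq_sum_range' hdeg (1 : ℝ)
  simp only [one_pow, mul_one] at this
  rw [← this, eval_prod]
  simp

/-- For distinct nonzero nodes on a single ray through the origin, Gautschi's upper bound
for the `∞`-norm (maximum absolute row sum) of the inverse Vandermonde matrix is attained:
`‖V⁻¹‖_∞ = max_k ∏_{k'≠k} (1 + |ω_{k'}|)/|ω_{k'} - ω_k|`. -/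
theorem gautschi_equality_ray (n : ℕ) (hn : 2 ≤ n) (ω : Fin n → ℂ)
    (hinj : Function.Injective ω) (hne : ∀ k, ω k ≠ 0)
    (θ : ℝ) (r : Fin n → ℝ) (hr : ∀ k, 0 < r k)
    (hray : ∀ k, ω k = (r k : ℂ) * Complex.exp (θ * Complex.I)) :
    (⨆ i, ∑ j, ‖((Matrix.of fun j k : Fin n => ω k ^ (j : ℕ))⁻¹) i j‖) =
      ⨆ k, ∏ k' ∈ Finset.univ.erase k,
        (1 + ‖ω k'‖) / ‖ω k' - ω k‖ := by
  classical
  set e : ℂ := Complex.exp (θ * Complex.I) with he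
  have habse : ‖e‖ = 1 := Complex.norm_exp_ofReal_mul_I θ
  have he0 : e ≠ 0 := Complex.exp_ne_zero _
  have hrinj : Function.Injective r := by
    intro a b hab
    apply hinj
    rw [hray a, hray b, hab]
  have hrInjOn : Set.InjOn r ↑(Finset.univ : Finset (Fin n)) := fun a _ b _ h => hrinj h
  set Q : Fin n → ℝ[X] := fun i => Lagrange.basis Finset.univ r i with hQ
  have hQdeg : ∀ i, (Q i).natDegree < n := by
    intro i
    rw [hQ, Lagrange.natDegree_basis hrInjOn (mem_univ i), card_univ, Fintype.card_fin]
    omega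
  set W : Matrix (Fin n) (Fin n) ℂ :=
    Matrix.of (fun i j : Fin n => ((Q i).coeff j : ℂ) * e⁻¹ ^ (j : ℕ)) with hW
  -- W is a left inverse of V
  have hWV : W * (Matrix.of fun j k : Fin n => ω k ^ (j : ℕ)) = 1 := by
    ext i l
    simp only [Matrix.mul_apply, hW, Matrix.of_apply, Matrix.one_apply]
    have hterm : ∀ k : Fin n,
        ((Q i).coeff k : ℂ) * e⁻¹ ^ (k : ℕ) * ω l ^ (k : ℕ)
          = (((Q i).coeff k * r l ^ (k : ℕ) : ℝ) : ℂ) := by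
      intro k
      rw [hray l]
      push_cast
      rw [mul_pow]
      rw [inv_pow, mul_comm ((r l : ℂ) ^ (k : ℕ)), ← mul_assoc, mul_assoc _ _ (e ^ (k : ℕ)),
        inv_mul_cancel₀ (pow_ne_zero _ he0), mul_one]
    rw [Finset.sum_congr rfl (fun k _ => hterm k), ← Complex.ofReal_sum]
    have : ∑ k : Fin n, (Q i).coeff k * r l ^ (k : ℕ) = (Q i).eval (r l) := by
      rw [Polynomial.eval_eq_sum_range' (hQdeg i) (r l),
        ← Fin.sum_univ_eq_sum_range (fun m => (Q i).coeff m * r l ^ m) n]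
    rw [this]
    by_cases hil : i = l
    · subst hil
      rw [hQ, Lagrange.eval_basis_self hrInjOn (mem_univ i)]
      simp
    · rw [hQ, Lagrange.eval_basis_of_ne hil (mem_univ l)]
      simp [Ne.symm hil, hil]
  have hVinv : (Matrix.of fun j k : Fin n => ω k ^ (j : ℕ))⁻¹ = W :=
    Matrix.inv_eq_left_inv hWV
  rw [hVinv]
  apply iSup_congr
  intro i
  -- row sum equals the product
  have habsW : ∀ j : Fin n, ‖W i j‖ = |(Q i).coeff j| := by
    intro j
    rw [hW]
    simp only [Matrix.of_apply, norm_mul, norm_pow, norm_inv, habse, Complex.norm_real]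
    simp
  rw [Finset.sum_congr rfl (fun j _ => habsW j)]
  -- decompose Q i
  have hQeq : Q i = C (∏ k ∈ Finset.univ.erase i, (r i - r k)⁻¹) *
      ∏ k ∈ Finset.univ.erase i, (X - C (r k)) := by
    rw [hQ]
    show ∏ j ∈ Finset.univ.erase i, Lagrange.basisDivisor (r i) (r j) = _
    rw [map_prod, ← Finset.prod_mul_distrib]
    rfl
  have hd : ∀ j : ℕ, |(Q i).coeff j| =
      (∏ k ∈ Finset.univ.erase i, |r i - r k|⁻¹) *
        |(∏ k ∈ Finset.univ.erase i, (X - C (r k))).coeff j| := by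
    intro j
    rw [hQeq, coeff_C_mul, abs_mul, Finset.abs_prod]
    simp [abs_inv]
  have hcard : (Finset.univ.erase i).card < n := by
    rw [card_erase_of_mem (mem_univ i), card_univ, Fintype.card_fin]; omega
  have hsum : ∑ j : Fin n, |(∏ k ∈ Finset.univ.erase i, (X - C (r k))).coeff (j : ℕ)|
      = ∏ k ∈ Finset.univ.erase i, (1 + r k) := by
    have hconv : (∑ j ∈ Finset.range n, |(∏ k ∈ Finset.univ.erase i, (X - C (r k))).coeff j|)
        = ∑ j : Fin n, |(∏ k ∈ Finset.univ.erase i, (X - C (r k))).coeff (j : ℕ)| :=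
      (Fin.sum_univ_eq_sum_range _ n).symm
    rw [← hconv]
    exact sum_abs_coeff _ _ (fun k => (hr k).le) n hcard
  calc ∑ j : Fin n, |(Q i).coeff (j : ℕ)|
      = ∑ j : Fin n, (∏ k ∈ Finset.univ.erase i, |r i - r k|⁻¹) *
          |(∏ k ∈ Finset.univ.erase i, (X - C (r k))).coeff (j : ℕ)| :=
        Finset.sum_congr rfl fun j _ => hd j
    _ = (∏ k ∈ Finset.univ.erase i, |r i - r k|⁻¹) * ∏ k ∈ Finset.univ.erase i, (1 + r k) := by
        rw [← Finset.mul_sum, hsum]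
    _ = ∏ k' ∈ Finset.univ.erase i,
          (1 + ‖ω k'‖) / ‖ω k' - ω i‖ := by
        have habsω : ∀ k, ‖ω k‖ = r k := by
          intro k
          rw [hray k, norm_mul, habse, Complex.norm_real, Real.norm_eq_abs, abs_of_pos (hr k), mul_one]
        have habssub : ∀ k k', ‖ω k' - ω k‖ = |r k' - r k| := by
          intro k k'
          rw [hray k, hray k', ← sub_mul, norm_mul, habse, mul_one, ← Complex.ofReal_sub,
            Complex.norm_real, Real.norm_eq_abs]
        rw [← Finset.prod_mul_distrib]
        refine Finset.prod_congr rfl fun k _ => ?_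
        rw [habsω k, habssub i k, abs_sub_comm, div_eq_mul_inv, mul_comm]
end

section
/- Let M ≥ 1, N ≥ 1 an integer, and 0 < δ ≤ 1/((2M+1)N). Let ω_m = e^{2πi m N δ} for m = -M, ..., M and let V be the (2M+1)×(2M+1) Vandermonde matrix with entries V_{jm} = ω_m^j, 0 ≤ j ≤ 2M. Then for every m with -M ≤ m ≤ M, the product ∏_{m'≠m} |ω_{m'} - ω_m| is at least ∏_{m'≠0} |ω_{m'} - ω_0|; that is, the product of distances from a node to the other nodes is minimized at the node ω_0 = 1. -/
open Finset

lemma abs_exp_I_sub_one (t : ℝ) :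
    ‖Complex.exp ((t : ℂ) * Complex.I) - 1‖ = 2 * |Real.sin (t / 2)| := by
  have key : Complex.exp ((t : ℂ) * Complex.I) - 1
      = Complex.exp (((t / 2 : ℝ) : ℂ) * Complex.I) *
        (2 * Complex.I * Complex.sin (((t / 2 : ℝ) : ℂ))) := by
    rw [show ((t:ℂ) * Complex.I) = ((t/2 : ℝ):ℂ)*Complex.I + ((t/2 : ℝ):ℂ)*Complex.I by
      push_cast; ring, Complex.exp_add, Complex.sin]
    have h2 : Complex.exp (((t/2:ℝ):ℂ)*Complex.I) *
        Complex.exp (-(((t/2:ℝ):ℂ)*Complex.I)) = 1 := by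
      rw [← Complex.exp_add]; simp
    have h3 : Complex.exp (-(((t/2:ℝ):ℂ)) * Complex.I) =
        Complex.exp (-(((t/2:ℝ):ℂ) * Complex.I)) := by ring_nf
    rw [h3]
    linear_combination h2 + (-(Complex.exp (-(((t/2:ℝ):ℂ)*Complex.I))) *
      Complex.exp (((t/2:ℝ):ℂ)*Complex.I) + Complex.exp (((t/2:ℝ):ℂ)*Complex.I) *
      Complex.exp (((t/2:ℝ):ℂ)*Complex.I)) * Complex.I_sq
  rw [key, norm_mul, Complex.norm_exp_ofReal_mul_I, one_mul, norm_mul, norm_mul,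
    Complex.norm_two, Complex.norm_I, ← Complex.ofReal_sin, Complex.norm_real, Real.norm_eq_abs, mul_one]

lemma sin_mono' {x y : ℝ} (hx : 0 ≤ x) (hxy : x ≤ y) (hsum : x + y ≤ Real.pi) :
    Real.sin x ≤ Real.sin y := by
  have h := Real.sin_sub_sin y x
  have h1 : 0 ≤ Real.sin ((y - x) / 2) := by
    apply Real.sin_nonneg_of_nonneg_of_le_pi <;> nlinarith [Real.pi_pos]
  have h2 : 0 ≤ Real.cos ((y + x) / 2) := by
    apply Real.cos_nonneg_of_mem_Icc
    constructor <;> [nlinarith [Real.pi_pos]; nlinarith]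
  nlinarith

lemma key_ineq (f : ℤ → ℝ) (hf0 : ∀ k, 0 ≤ f k) (heven : ∀ k, f (-k) = f k)
    (M : ℤ) (hM : 0 ≤ M)
    (hstep : ∀ k, M < k → k ≤ 2 * M → f (2 * M + 1 - k) ≤ f k)
    (a b : ℤ) (hb0 : 0 ≤ b) (hab : a + b = 2 * M) (hbM : b ≤ M) :
    (∏ k ∈ Icc (-M) M |>.erase 0, f k) ≤ ∏ k ∈ Icc (-a) b |>.erase 0, f k := by
  have haM : M ≤ a := by omega
  have split : ∀ A B : ℤ, 0 ≤ A → 0 ≤ B →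
      (∏ k ∈ Icc (-A) B |>.erase 0, f k)
        = (∏ k ∈ Ioc (0:ℤ) A, f k) * ∏ k ∈ Ioc (0:ℤ) B, f k := by
    intro A B hA hB
    have hset : (Icc (-A) B |>.erase 0) = Ico (-A) 0 ∪ Ioc 0 B := by
      ext k
      simp only [Finset.mem_erase, Finset.mem_Icc, Finset.mem_Ico, Finset.mem_Ioc,
        Finset.mem_union]
      omega
    have hdisj : Disjoint (Ico (-A) (0:ℤ)) (Ioc 0 B) := by
      rw [Finset.disjoint_left]
      intro k hk hk'
      simp only [Finset.mem_Ico, Finset.mem_Ioc] at *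
      omega
    rw [hset, Finset.prod_union hdisj]
    congr 1
    exact Finset.prod_nbij' (fun k => -k) (fun k => -k)
      (by intro k hk; simp only [Finset.mem_Ico, Finset.mem_Ioc] at *; omega)
      (by intro k hk; simp only [Finset.mem_Ico, Finset.mem_Ioc] at *; omega)
      (by intro k _; ring) (by intro k _; ring)
      (by intro k _; rw [heven])
  rw [split M M hM hM, split a b (by omega) hb0]
  have hd1 : Disjoint (Ioc (0:ℤ) M) (Ioc M a) := by
    rw [Finset.disjoint_left]; intro k hk hk'
    simp only [Finset.mem_Ioc] at *; omega
  have hd2 : Disjoint (Ioc (0:ℤ) b) (Ioc b M) := by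
    rw [Finset.disjoint_left]; intro k hk hk'
    simp only [Finset.mem_Ioc] at *; omega
  have hFa : (∏ k ∈ Ioc (0:ℤ) a, f k)
      = (∏ k ∈ Ioc (0:ℤ) M, f k) * ∏ k ∈ Ioc M a, f k := by
    rw [← Finset.prod_union hd1]
    congr 1; ext k; simp only [Finset.mem_union, Finset.mem_Ioc]; omega
  have hFM : (∏ k ∈ Ioc (0:ℤ) M, f k)
      = (∏ k ∈ Ioc (0:ℤ) b, f k) * ∏ k ∈ Ioc b M, f k := by
    rw [← Finset.prod_union hd2]
    congr 1; ext k; simp only [Finset.mem_union, Finset.mem_Ioc]; omega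
  rw [hFa, hFM]
  have hQP : (∏ k ∈ Ioc b M, f k) ≤ ∏ k ∈ Ioc M a, f k := by
    have hreidx : (∏ k ∈ Ioc b M, f k) = ∏ k ∈ Ioc M a, f (2 * M + 1 - k) :=
      Finset.prod_nbij' (fun k => 2 * M + 1 - k) (fun k => 2 * M + 1 - k)
        (by intro k hk; simp only [Finset.mem_Ioc] at *; omega)
        (by intro k hk; simp only [Finset.mem_Ioc] at *; omega)
        (by intro k _; omega) (by intro k _; omega)
        (by intro k _; congr 1; omega)
    rw [hreidx]
    apply Finset.prod_le_prod (fun k _ => hf0 _)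
    intro k hk
    simp only [Finset.mem_Ioc] at hk
    exact hstep k hk.1 (by omega)
  have hc : 0 ≤ ∏ k ∈ Ioc (0:ℤ) b, f k := Finset.prod_nonneg fun k _ => hf0 _
  have hQ : 0 ≤ ∏ k ∈ Ioc b M, f k := Finset.prod_nonneg fun k _ => hf0 _
  have hP : 0 ≤ ∏ k ∈ Ioc M a, f k := Finset.prod_nonneg fun k _ => hf0 _
  nlinarith [mul_le_mul_of_nonneg_left hQP (mul_nonneg (mul_nonneg hc hQ) hc), hQP]


/-- For `0 < δ ≤ 1/((2M+1)N)` and nodes `ω_m = e^{2πimNδ}`, `m = -M,…,M`, the product of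
distances from a node to the other nodes is minimized at the central node `ω_0 = 1`. -/
theorem product_minimized_at_center (M N : ℕ) (hM : 1 ≤ M) (hN : 1 ≤ N) (δ : ℝ)
    (hδ0 : 0 < δ) (hδ1 : δ ≤ 1 / ((2 * M + 1) * N)) :
    ∀ m ∈ Finset.Icc (-(M : ℤ)) M,
      (∏ m' ∈ (Finset.Icc (-(M : ℤ)) M).erase 0,
          ‖(Complex.exp (2 * Real.pi * Complex.I * (m' : ℂ) * (N : ℂ) * (δ : ℂ)) -
            Complex.exp (2 * Real.pi * Complex.I * ((0 : ℤ) : ℂ) * (N : ℂ) * (δ : ℂ)))‖) ≤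
      ∏ m' ∈ (Finset.Icc (-(M : ℤ)) M).erase m,
          ‖(Complex.exp (2 * Real.pi * Complex.I * (m' : ℂ) * (N : ℂ) * (δ : ℂ)) -
            Complex.exp (2 * Real.pi * Complex.I * (m : ℂ) * (N : ℂ) * (δ : ℂ)))‖ := by
  intro m hm
  simp only [Finset.mem_Icc] at hm
  set α : ℝ := Real.pi * N * δ with hα
  set f : ℤ → ℝ := fun k => 2 * |Real.sin (k * α)| with hf
  -- rewrite each |ω_{m'} - ω_m| as f (m' - m)
  have habs : ∀ m₀ m' : ℤ,
      ‖(Complex.exp (2 * Real.pi * Complex.I * (m' : ℂ) * (N : ℂ) * (δ : ℂ)) -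
        Complex.exp (2 * Real.pi * Complex.I * (m₀ : ℂ) * (N : ℂ) * (δ : ℂ)))‖ = f (m' - m₀) := by
    intro m₀ m'
    have h1 : Complex.exp (2 * Real.pi * Complex.I * (m' : ℂ) * (N : ℂ) * (δ : ℂ)) -
        Complex.exp (2 * Real.pi * Complex.I * (m₀ : ℂ) * (N : ℂ) * (δ : ℂ))
        = Complex.exp (2 * Real.pi * Complex.I * (m₀ : ℂ) * (N : ℂ) * (δ : ℂ)) *
          (Complex.exp ((((m' - m₀ : ℤ) * (2 * Real.pi * N * δ) : ℝ) : ℂ) * Complex.I) - 1) := by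
      rw [mul_sub, mul_one, ← Complex.exp_add]
      congr 1
      push_cast
      ring
    rw [h1, norm_mul]
    have h2 : ‖Complex.exp (2 * Real.pi * Complex.I * (m₀ : ℂ) * (N : ℂ) * (δ : ℂ))‖
        = 1 := by
      rw [show (2 * (Real.pi : ℂ) * Complex.I * (m₀ : ℂ) * (N : ℂ) * (δ : ℂ))
          = (((2 * Real.pi * m₀ * N * δ : ℝ)) : ℂ) * Complex.I by push_cast; ring]
      exact Complex.norm_exp_ofReal_mul_I _
    rw [h2, one_mul, abs_exp_I_sub_one]
    simp only [hf]
    congr 2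
    push_cast
    rw [hα]; ring
  have hf0 : ∀ k, 0 ≤ f k := fun k => by positivity
  have heven : ∀ k, f (-k) = f k := by
    intro k
    simp only [hf]
    push_cast
    rw [neg_mul, Real.sin_neg, abs_neg]
  have hαpos : 0 < α := by
    have : (0:ℝ) < (N:ℝ) := by exact_mod_cast hN
    positivity
  have hαbound : (2 * (M:ℝ) + 1) * α ≤ Real.pi := by
    have hpos : (0:ℝ) < (2 * M + 1) * N := by
      have : (0:ℝ) < (N:ℝ) := by exact_mod_cast hN
      positivity
    have h : δ * ((2 * (M:ℝ) + 1) * N) ≤ 1 := by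
      rw [← le_div_iff₀ hpos] at *
      linarith [hδ1]
    calc (2 * (M:ℝ) + 1) * α = Real.pi * (δ * ((2 * (M:ℝ) + 1) * N)) := by rw [hα]; ring
      _ ≤ Real.pi * 1 := by
          apply mul_le_mul_of_nonneg_left h Real.pi_pos.le
      _ = Real.pi := mul_one _
  have hstep : ∀ k : ℤ, (M:ℤ) < k → k ≤ 2 * M → f (2 * M + 1 - k) ≤ f k := by
    intro k hk1 hk2
    simp only [hf]
    have hx0 : (0:ℝ) ≤ ((2 * M + 1 - k : ℤ) : ℝ) * α := by
      apply mul_nonneg _ hαpos.le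
      exact_mod_cast (by omega : (0:ℤ) ≤ 2 * M + 1 - k)
    have hxy : ((2 * M + 1 - k : ℤ) : ℝ) * α ≤ (k : ℝ) * α := by
      apply mul_le_mul_of_nonneg_right _ hαpos.le
      exact_mod_cast (by omega : (2 * M + 1 - k : ℤ) ≤ k)
    have hsum : ((2 * M + 1 - k : ℤ) : ℝ) * α + (k : ℝ) * α ≤ Real.pi := by
      have : ((2 * M + 1 - k : ℤ) : ℝ) * α + (k : ℝ) * α = (2 * (M:ℝ) + 1) * α := by
        push_cast; ring
      rw [this]; exact hαbound
    have hs := sin_mono' hx0 hxy hsum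
    have hxpi : ((2 * M + 1 - k : ℤ) : ℝ) * α ≤ Real.pi := by
      have hy0 : (0:ℝ) ≤ (k : ℝ) * α := by
        apply mul_nonneg _ hαpos.le
        exact_mod_cast (by omega : (0:ℤ) ≤ k)
      linarith
    rw [abs_of_nonneg (Real.sin_nonneg_of_nonneg_of_le_pi hx0 hxpi)]
    have := le_abs_self (Real.sin ((k:ℝ) * α))
    linarith
  -- rewrite both sides via habs
  rw [Finset.prod_congr rfl (fun m' _ => habs 0 m'), Finset.prod_congr rfl (fun m' _ => habs m m')]
  simp only [sub_zero]
  -- reindex RHS by k = m' - m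
  have hreidx : (∏ m' ∈ (Finset.Icc (-(M:ℤ)) M).erase m, f (m' - m))
      = ∏ k ∈ (Finset.Icc (-(M:ℤ) - m) ((M:ℤ) - m)).erase 0, f k :=
    Finset.prod_nbij' (fun k => k - m) (fun k => k + m)
      (by intro k hk; simp only [Finset.mem_erase, Finset.mem_Icc] at *; omega)
      (by intro k hk; simp only [Finset.mem_erase, Finset.mem_Icc] at *; omega)
      (by intro k _; omega) (by intro k _; omega)
      (by intro k _; rfl)
  rw [hreidx]
  rcases le_or_gt 0 m with hm0 | hm0
  · have : Finset.Icc (-(M:ℤ) - m) ((M:ℤ) - m) = Finset.Icc (-((M:ℤ) + m)) ((M:ℤ) - m) := by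
      congr 1; omega
    rw [this]
    exact key_ineq f hf0 heven M (by omega) hstep ((M:ℤ) + m) ((M:ℤ) - m)
      (by omega) (by omega) (by omega)
  · -- m < 0 : flip via evenness
    have hflip : (∏ k ∈ (Finset.Icc (-(M:ℤ) - m) ((M:ℤ) - m)).erase 0, f k)
        = ∏ k ∈ (Finset.Icc (-((M:ℤ) - m)) ((M:ℤ) + m)).erase 0, f k :=
      Finset.prod_nbij' (fun k => -k) (fun k => -k)
        (by intro k hk; simp only [Finset.mem_erase, Finset.mem_Icc] at *; omega)
        (by intro k hk; simp only [Finset.mem_erase, Finset.mem_Icc] at *; omega)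
        (by intro k _; omega) (by intro k _; omega)
        (by intro k _; exact (heven k).symm)
    rw [hflip]
    exact key_ineq f hf0 heven M (by omega) hstep ((M:ℤ) - m) ((M:ℤ) + m)
      (by omega) (by omega) (by omega)
end

section
/- Let n > 1 and let ω_1, ..., ω_n be distinct nonzero complex numbers with |ω_k| = 1 for all k. Then the inverse of the n×n Vandermonde matrix V with entries V_{jk} = ω_k^{j-1} satisfies ‖V^{-1}‖_∞ ≤ max_{1≤k≤n} ∏_{k'≠k} 2/|ω_{k'} − ω_k|. -/
open Polynomial Finset

/-- ℓ¹ norm of the coefficients of a complex polynomial. -/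
noncomputable def gautschiL1 (p : ℂ[X]) : ℝ := ∑ i ∈ p.support, ‖p.coeff i‖

lemma gautschiL1_nonneg (p : ℂ[X]) : 0 ≤ gautschiL1 p :=
  Finset.sum_nonneg fun _ _ => norm_nonneg _

lemma gautschiL1_eq_range {p : ℂ[X]} {m : ℕ} (h : p.natDegree < m) :
    gautschiL1 p = ∑ i ∈ range m, ‖p.coeff i‖ := by
  refine Finset.sum_subset ?_ ?_
  · intro i hi
    exact mem_range.mpr (lt_of_le_of_lt (le_natDegree_of_mem_supp i hi) h)
  · intro i _ hi
    simp [Polynomial.notMem_support_iff.mp hi]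

lemma gautschiL1_mul_le (p q : ℂ[X]) : gautschiL1 (p * q) ≤ gautschiL1 p * gautschiL1 q := by
  set K := p.natDegree + q.natDegree + 1 with hK
  have hpq : (p * q).natDegree < K :=
    lt_of_le_of_lt (Polynomial.natDegree_mul_le) (by omega)
  rw [gautschiL1_eq_range hpq, gautschiL1_eq_range (show p.natDegree < K by omega),
    gautschiL1_eq_range (show q.natDegree < K by omega)]
  have h1 : ∑ i ∈ range K, ‖(p * q).coeff i‖
      ≤ ∑ i ∈ range K, ∑ x ∈ Finset.HasAntidiagonal.antidiagonal i,
          ‖p.coeff x.1‖ * ‖q.coeff x.2‖ := by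
    refine Finset.sum_le_sum fun i _ => ?_
    rw [Polynomial.coeff_mul]
    refine le_trans (norm_sum_le _ _) ?_
    exact le_of_eq (Finset.sum_congr rfl fun x _ => norm_mul _ _)
  refine h1.trans ?_
  have hdisj : (↑(range K) : Set ℕ).PairwiseDisjoint Finset.HasAntidiagonal.antidiagonal := by
    intro a _ b _ hab
    refine Finset.disjoint_left.mpr fun x hxa hxb => hab ?_
    rw [Finset.HasAntidiagonal.mem_antidiagonal] at hxa hxb
    omega
  rw [← Finset.sum_biUnion hdisj]
  have hsub : (range K).biUnion Finset.HasAntidiagonal.antidiagonal ⊆ range K ×ˢ range K := by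
    intro x hx
    rcases Finset.mem_biUnion.mp hx with ⟨i, hi, hxi⟩
    rw [Finset.HasAntidiagonal.mem_antidiagonal] at hxi
    rw [Finset.mem_range] at hi
    refine Finset.mem_product.mpr ⟨Finset.mem_range.mpr ?_, Finset.mem_range.mpr ?_⟩ <;> omega
  refine le_trans (Finset.sum_le_sum_of_subset_of_nonneg hsub fun x _ _ =>
    mul_nonneg (norm_nonneg _) (norm_nonneg _)) ?_
  rw [Finset.sum_product, Finset.sum_mul_sum]

lemma gautschiL1_linear_le (a y : ℂ) :
    gautschiL1 (C a * (X - C y)) ≤ ‖a‖ * (1 + ‖y‖) := by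
  have hdeg : (C a * (X - C y)).natDegree < 2 := by
    refine lt_of_le_of_lt Polynomial.natDegree_mul_le ?_
    simp [Polynomial.natDegree_X_sub_C]
  rw [gautschiL1_eq_range hdeg]
  rw [Finset.sum_range_succ, Finset.sum_range_one]
  have h0 : (C a * (X - C y)).coeff 0 = a * (-y) := by simp
  have h1 : (C a * (X - C y)).coeff 1 = a := by simp
  rw [h0, h1, norm_mul, mul_add, mul_one]
  simp [mul_comm, add_comm]

lemma gautschiL1_one : gautschiL1 (1 : ℂ[X]) = 1 := by
  rw [gautschiL1_eq_range (show (1 : ℂ[X]).natDegree < 1 by simp)]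
  simp

lemma gautschiL1_prod_le {ι : Type*} [DecidableEq ι] (t : Finset ι) (c y : ι → ℂ) :
    gautschiL1 (∏ j ∈ t, C (c j) * (X - C (y j)))
      ≤ ∏ j ∈ t, ‖c j‖ * (1 + ‖y j‖) := by
  induction t using Finset.induction_on with
  | empty => simp [gautschiL1_one]
  | @insert a t ha ih =>
    rw [Finset.prod_insert ha, Finset.prod_insert ha]
    refine le_trans (gautschiL1_mul_le _ _) ?_
    have h1 : (0:ℝ) ≤ ‖c a‖ * (1 + ‖y a‖) := by positivity
    exact mul_le_mul (gautschiL1_linear_le _ _) ih (gautschiL1_nonneg _)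
      h1

/-- Gautschi's upper bound for unimodular nodes: for distinct nonzero nodes on the unit
circle, the maximum absolute row sum of the inverse Vandermonde matrix satisfies
`‖V⁻¹‖_∞ ≤ max_k ∏_{k'≠k} 2/|ω_{k'} - ω_k|`. -/
theorem gautschi_upper_bound_unimodular (n : ℕ) (hn : 1 < n) (ω : Fin n → ℂ)
    (hinj : Function.Injective ω) (hne : ∀ k, ω k ≠ 0)
    (hunit : ∀ k, ‖ω k‖ = 1) :
    (⨆ i, ∑ j, ‖((Matrix.of fun j k : Fin n => ω k ^ (j : ℕ))⁻¹) i j‖) ≤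
      ⨆ k, ∏ k' ∈ Finset.univ.erase k, 2 / ‖ω k' - ω k‖ := by
  classical
  haveI : Nonempty (Fin n) := ⟨⟨0, by omega⟩⟩
  set V : Matrix (Fin n) (Fin n) ℂ := Matrix.of fun j k : Fin n => ω k ^ (j : ℕ) with hV
  have hinjOn : Set.InjOn ω ↑(Finset.univ : Finset (Fin n)) := hinj.injOn
  set L : Fin n → ℂ[X] := fun k => Lagrange.basis Finset.univ ω k with hL
  have hdeg : ∀ k, (L k).natDegree < n := by
    intro k
    rw [hL, Lagrange.natDegree_basis hinjOn (Finset.mem_univ k), Finset.card_univ,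
      Fintype.card_fin]
    omega
  have hWV : (Matrix.of fun k j : Fin n => (L k).coeff (j : ℕ)) * V = 1 := by
    ext k l
    rw [Matrix.mul_apply]
    have : ∑ j : Fin n, (Matrix.of fun k j : Fin n => (L k).coeff (j : ℕ)) k j * V j l
        = ∑ j ∈ Finset.range n, (L k).coeff j * (ω l) ^ j := by
      rw [← Fin.sum_univ_eq_sum_range]
      rfl
    rw [this, ← Polynomial.eval_eq_sum_range' (hdeg k) (ω l)]
    rcases eq_or_ne k l with rfl | hkl
    · rw [hL, Lagrange.eval_basis_self hinjOn (Finset.mem_univ k), Matrix.one_apply_eq]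
    · rw [hL, Lagrange.eval_basis_of_ne hkl (Finset.mem_univ l), Matrix.one_apply_ne hkl]
  have hVinv : V⁻¹ = Matrix.of fun k j : Fin n => (L k).coeff (j : ℕ) :=
    Matrix.inv_eq_left_inv hWV
  apply ciSup_le
  intro k
  have hrow : ∑ j, ‖(V⁻¹) k j‖ = gautschiL1 (L k) := by
    rw [gautschiL1_eq_range (hdeg k), ← Fin.sum_univ_eq_sum_range]
    refine Finset.sum_congr rfl fun j _ => ?_
    rw [hVinv]
    rfl
  have hbound : gautschiL1 (L k) ≤ ∏ k' ∈ Finset.univ.erase k, 2 / ‖ω k' - ω k‖ := by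
    have hLk : L k = ∏ j ∈ Finset.univ.erase k, C ((ω k - ω j)⁻¹) * (X - C (ω j)) := by
      rw [hL]
      rfl
    rw [hLk]
    refine le_trans (gautschiL1_prod_le _ _ _) ?_
    refine le_of_eq (Finset.prod_congr rfl fun j _ => ?_)
    rw [norm_inv, hunit j, norm_sub_rev]
    norm_num
    ring
  refine le_trans (le_of_eq hrow) (le_trans hbound ?_)
  exact le_ciSup (f := fun k : Fin n => ∏ k' ∈ Finset.univ.erase k, 2 / ‖ω k' - ω k‖)
    (Set.Finite.bddAbove (Set.finite_range _)) k
end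

section
/- Let n > 1 and let ω_1, ..., ω_n be distinct nonzero complex numbers. Then the inverse of the n×n Vandermonde matrix V with entries V_{jk} = ω_k^{j-1} satisfies ‖V^{-1}‖_∞ > max_{1≤k≤n} ∏_{k'≠k} 1/|ω_{k'} − ω_k|. -/
open Polynomial Finset in
/-- Gautschi's lower bound: for distinct nonzero nodes, the maximum absolute row sum of the
inverse Vandermonde matrix satisfies `‖V⁻¹‖_∞ > max_k ∏_{k'≠k} 1/|ω_{k'} - ω_k|`. -/
theorem gautschi_lower_bound (n : ℕ) (hn : 1 < n) (ω : Fin n → ℂ)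
    (hinj : Function.Injective ω) (hne : ∀ k, ω k ≠ 0) :
    (⨆ k, ∏ k' ∈ Finset.univ.erase k, 1 / ‖ω k' - ω k‖) <
      ⨆ i, ∑ j, ‖((Matrix.of fun j k : Fin n => ω k ^ (j : ℕ))⁻¹) i j‖ := by
  classical
  haveI : NeZero n := ⟨by omega⟩
  set V : Matrix (Fin n) (Fin n) ℂ := Matrix.of fun j k : Fin n => ω k ^ (j : ℕ) with hV
  set A := V⁻¹ with hA
  have hdet : IsUnit V.det := by
    have hVt : V = (Matrix.vandermonde ω).transpose := by
      ext j k; rfl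
    rw [hVt, Matrix.det_transpose, isUnit_iff_ne_zero]
    exact Matrix.det_vandermonde_ne_zero_iff.mpr hinj
  have hAV : A * V = 1 := Matrix.nonsing_inv_mul V hdet
  have key : ∀ k k' : Fin n, ∑ j, A k j * ω k' ^ (j : ℕ) = if k = k' then 1 else 0 := by
    intro k k'
    have := congrFun (congrFun (congrArg (fun M => (M : Matrix (Fin n) (Fin n) ℂ)) hAV) k) k'
    simpa [Matrix.mul_apply, Matrix.one_apply, hV] using this
  -- the polynomial with coefficients from row k of A
  set p : Fin n → ℂ[X] := fun k => ∑ j : Fin n, C (A k j) * X ^ (j : ℕ) with hp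
  have heval : ∀ (k : Fin n) (x : ℂ), (p k).eval x = ∑ j, A k j * x ^ (j : ℕ) := by
    intro k x; simp [hp, eval_finset_sum]
  have hdeg : ∀ k, (p k).degree < ((Finset.univ : Finset (Fin n)).card : WithBot ℕ) := by
    intro k
    refine lt_of_le_of_lt (degree_sum_le _ _) ?_
    rw [Finset.sup_lt_iff (by simp [Nat.cast_withBot])]
    intro j _
    refine lt_of_le_of_lt (degree_C_mul_X_pow_le _ _) ?_
    simp only [card_univ, Fintype.card_fin, Nat.cast_lt]
    exact j.2
  have hbasis : ∀ k, p k = Lagrange.basis Finset.univ ω k := by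
    intro k
    have h1 : p k = Lagrange.interpolate Finset.univ ω (fun k' => if k' = k then 1 else 0) := by
      refine Lagrange.eq_interpolate_of_eval_eq _ hinj.injOn (hdeg k) fun i _ => ?_
      rw [heval, key]
      simp [eq_comm]
    rw [h1, Lagrange.interpolate_apply, Finset.sum_eq_single k]
    · simp
    · intro j _ hj; simp [hj]
    · intro h; exact absurd (mem_univ k) h
  have hcoeff : ∀ (k : Fin n) (m : Fin n), (p k).coeff (m : ℕ) = A k m := by
    intro k m
    simp only [hp, finset_sum_coeff, coeff_C_mul, coeff_X_pow]
    rw [Finset.sum_eq_single m]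
    · simp
    · intro j _ hj
      rw [if_neg (by simpa [Fin.val_inj] using (Ne.symm hj) : ¬ (m : ℕ) = (j : ℕ)), mul_zero]
    · intro h; exact absurd (mem_univ m) h
  set last : Fin n := ⟨n - 1, by omega⟩ with hlastdef
  have hlead : ∀ k, A k last = ∏ k' ∈ Finset.univ.erase k, (ω k - ω k')⁻¹ := by
    intro k
    have hnd : (Lagrange.basis Finset.univ ω k).natDegree = n - 1 := by
      simpa using Lagrange.natDegree_basis hinj.injOn (mem_univ k)
    have := hcoeff k last
    rw [hbasis k] at this
    rw [← this]
    have hcl : ((last : Fin n) : ℕ) = (Lagrange.basis Finset.univ ω k).natDegree := by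
      rw [hnd]
    rw [hcl, ← leadingCoeff, Lagrange.basis, leadingCoeff_prod]
    refine Finset.prod_congr rfl fun j hj => ?_
    have hne' : ω k - ω j ≠ 0 := sub_ne_zero.mpr (fun h => (mem_erase.mp hj).1 (hinj h).symm)
    rw [Lagrange.basisDivisor, leadingCoeff_mul, leadingCoeff_C,
      (monic_X_sub_C (ω j)).leadingCoeff, mul_one]
  set P : Fin n → ℝ := fun k => ∏ k' ∈ Finset.univ.erase k, 1 / ‖ω k' - ω k‖ with hP
  have habs : ∀ k, ‖A k last‖ = P k := by
    intro k
    rw [hlead, hP]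
    rw [norm_prod]
    refine Finset.prod_congr rfl fun j hj => ?_
    rw [norm_inv, one_div, norm_sub_rev]
  have hPpos : ∀ k, 0 < P k := by
    intro k
    refine Finset.prod_pos fun j hj => ?_
    have h0 : ω j - ω k ≠ 0 := sub_ne_zero.mpr fun h => (mem_erase.mp hj).1 (hinj h)
    exact one_div_pos.mpr (norm_pos_iff.mpr h0)
  -- there is another nonzero entry in row k
  have hother : ∀ k, ∃ j0 : Fin n, j0 ≠ last ∧ A k j0 ≠ 0 := by
    intro k
    by_contra hcon
    push_neg at hcon
    obtain ⟨k', hk'⟩ := Fintype.exists_ne_of_one_lt_card (by simpa using hn) k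
    have h0 := key k k'
    rw [if_neg (Ne.symm hk'), Finset.sum_eq_single last] at h0
    · have hA0 : A k last = 0 := by
        rcases mul_eq_zero.mp h0 with h | h
        · exact h
        · exact absurd h (pow_ne_zero _ (hne k'))
      have := habs k
      rw [hA0, norm_zero] at this
      exact absurd this.symm (ne_of_gt (hPpos k))
    · intro j _ hj; rw [hcon j hj, zero_mul]
    · intro h; exact absurd (mem_univ last) h
  -- row sum bound
  have hrow : ∀ k, P k < ∑ j, ‖A k j‖ := by
    intro k
    obtain ⟨j0, hj0ne, hj0⟩ := hother k
    have h1 : ∑ j, ‖A k j‖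
        = ‖A k j0‖ + ∑ j ∈ Finset.univ.erase j0, ‖A k j‖ := by
      exact (Finset.add_sum_erase _ _ (mem_univ j0)).symm
    have h2 : ‖A k last‖ ≤ ∑ j ∈ Finset.univ.erase j0, ‖A k j‖ :=
      Finset.single_le_sum (fun j _ => norm_nonneg _)
        (mem_erase.mpr ⟨Ne.symm hj0ne, mem_univ _⟩)
    have h3 : 0 < ‖A k j0‖ := norm_pos_iff.mpr hj0
    calc P k = ‖A k last‖ := (habs k).symm
      _ < ‖A k j0‖ + ‖A k last‖ := by linarith
      _ ≤ ‖A k j0‖ + ∑ j ∈ Finset.univ.erase j0, ‖A k j‖ := by linarith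
      _ = ∑ j, ‖A k j‖ := h1.symm
  obtain ⟨k0, hk0⟩ := Finite.exists_max P
  calc (⨆ k, P k) ≤ P k0 := ciSup_le hk0
    _ < ∑ j, ‖A k0 j‖ := hrow k0
    _ ≤ ⨆ i, ∑ j, ‖A i j‖ := le_ciSup (f := fun i => ∑ j, ‖A i j‖) (Finite.bddAbove_range _) k0
end
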